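/- Assume hypothesis (B1) and 0 ≤ α < p − 1, let δ = (n−1)(p−1−α)/(p−1), and let (u,v) be a non-constant positive radial solution on B_R of the system Δ_p u = f₁(|x|)·g₁(v)·|∇u|^α, Δ_p v = f₂(|x|)·g₂(v)·g₃(|∇u|). Then for all 0 < r < R, (1/r)·u'(r)^{p−1−α} ≤ (δ/((n−1)(δ+1)))·f₁(r)·g₁(v(r)). -/

import Mathlib

/-! The flux `h(t) = t^{n-1} u'(t) |u'(t)|^{p-2}` vanishes at `0` and has nonnegative
derivative, so `u' ≥ 0`; in the same way `v' ≥ 0`, hence `F(t) = f₁(t) g₁(v(t))` is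
nondecreasing. With `β = (p-1-α)/(p-1) = δ/(n-1)` one has `h^β = t^δ u'^{p-1-α}` and, wherever
`h ≠ 0`, `(h^β)' = β F(t) t^δ ≤ β F(r) t^δ`. Comparing `h^β` with `β F(r) t^{δ+1}/(δ+1)` to the
right of the last zero of `h` gives `r^δ u'(r)^{p-1-α} ≤ β F(r) r^{δ+1}/(δ+1)`. -/

open Set Filter Topology

noncomputable section

/-- Hypothesis (B1) for a single function: continuous, non-decreasing on `[0,∞)`,
positive on `(0,∞)`. -/
def B1cond (f : ℝ → ℝ) : Prop :=
  ContinuousOn f (Set.Ici 0) ∧ MonotoneOn f (Set.Ici 0) ∧ ∀ t : ℝ, 0 < t → 0 < f t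

/-- `w` is not a constant function on `[0,R)`. -/
def NonConstOn (R : EReal) (w : ℝ → ℝ) : Prop :=
  ¬ ∃ c : ℝ, ∀ r : ℝ, 0 ≤ r → (r : EReal) < R → w r = c

/-- A positive radial solution on `B_R` (with `0 < R ≤ ∞`) of the system
`Δ_p u = f₁(|x|)·g₁(v)·|∇u|^α`, `Δ_p v = f₂(|x|)·g₂(v)·g₃(|∇u|)`:
a pair of C¹ functions `u, v : [0,R) → ℝ` (with derivatives `u', v'`) such that
the maps `r ↦ r^{n−1}·u'(r)·|u'(r)|^{p−2}` and `r ↦ r^{n−1}·v'(r)·|v'(r)|^{p−2}`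
are differentiable on `(0,R)` with the prescribed derivatives, `u'(0) = v'(0) = 0`,
and `u, v > 0` on `(0,R)`. -/
structure RadialSol (n : ℕ) (p α : ℝ) (f₁ f₂ g₁ g₂ g₃ : ℝ → ℝ) (R : EReal)
    (u v u' v' : ℝ → ℝ) : Prop where
  hu : ∀ r : ℝ, 0 ≤ r → (r : EReal) < R → HasDerivWithinAt u (u' r) (Set.Ici 0) r
  hv : ∀ r : ℝ, 0 ≤ r → (r : EReal) < R → HasDerivWithinAt v (v' r) (Set.Ici 0) r
  hu'c : ContinuousOn u' {r : ℝ | 0 ≤ r ∧ (r : EReal) < R}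
  hv'c : ContinuousOn v' {r : ℝ | 0 ≤ r ∧ (r : EReal) < R}
  hu'0 : u' 0 = 0
  hv'0 : v' 0 = 0
  hupos : ∀ r : ℝ, 0 < r → (r : EReal) < R → 0 < u r
  hvpos : ∀ r : ℝ, 0 < r → (r : EReal) < R → 0 < v r
  hequ : ∀ r : ℝ, 0 < r → (r : EReal) < R →
    HasDerivAt (fun t : ℝ => t ^ (n - 1) * u' t * |u' t| ^ (p - 2))
      (r ^ (n - 1) * (f₁ r * g₁ (v r) * |u' r| ^ α)) r
  heqv : ∀ r : ℝ, 0 < r → (r : EReal) < R →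
    HasDerivAt (fun t : ℝ => t ^ (n - 1) * v' t * |v' t| ^ (p - 2))
      (r ^ (n - 1) * (f₂ r * g₂ (v r) * g₃ (|u' r|))) r

def radialFlux (k : ℕ) (p : ℝ) (w : ℝ → ℝ) (t : ℝ) : ℝ :=
  t ^ k * w t * |w t| ^ (p - 2)

lemma abs_mul_abs_rpow_sub_two {p : ℝ} (hp : 1 < p) (s : ℝ) :
    |s * |s| ^ (p - 2)| = |s| ^ (p - 1) := by
  rw [abs_mul, abs_of_nonneg (Real.rpow_nonneg (abs_nonneg s) _), show p - 1 = 1 + (p - 2) by ring,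
    Real.rpow_add' (abs_nonneg s) (by linarith), Real.rpow_one]

lemma continuous_mul_abs_rpow_sub_two {p : ℝ} (hp : 1 < p) :
    Continuous fun s : ℝ => s * |s| ^ (p - 2) := by
  refine continuous_iff_continuousAt.2 fun x => ?_
  rcases eq_or_ne x 0 with rfl | hx
  · have hc : Continuous fun s : ℝ => |s| ^ (p - 1) :=
      (Real.continuous_rpow_const (by linarith)).comp continuous_abs
    have hlim : Tendsto (fun s : ℝ => |s| ^ (p - 1)) (𝓝 0) (𝓝 0) := by
      simpa [Real.zero_rpow (by linarith : p - 1 ≠ 0)] using hc.tendsto 0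
    simpa [ContinuousAt] using
      squeeze_zero_norm (fun s => (abs_mul_abs_rpow_sub_two hp s).le) hlim
  · exact continuousAt_id.mul (continuous_abs.continuousAt.rpow_const (.inl (abs_ne_zero.2 hx)))

lemma B1cond.nonneg {f : ℝ → ℝ} (hf : B1cond f) {t : ℝ} (ht : 0 ≤ t) : 0 ≤ f t := by
  rcases ht.eq_or_lt with rfl | ht
  · have hlim : Tendsto f (𝓝[>] 0) (𝓝 (f 0)) :=
      (hf.1 0 self_mem_Ici).tendsto.mono_left (nhdsWithin_mono _ Ioi_subset_Ici_self)
    exact ge_of_tendsto hlim (eventually_nhdsWithin_of_forall fun t ht => (hf.2.2 t ht).le)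
  · exact (hf.2.2 t ht).le

section radialFlux

variable {k : ℕ} {p : ℝ} {w : ℝ → ℝ}

lemma continuousOn_radialFlux {s : Set ℝ} (hp : 1 < p) (hw : ContinuousOn w s) :
    ContinuousOn (radialFlux k p w) s := by
  refine ((continuous_pow k).continuousOn.mul
    ((continuous_mul_abs_rpow_sub_two hp).comp_continuousOn hw)).congr fun t _ => ?_
  simp only [radialFlux, Pi.mul_apply, Function.comp_apply, mul_assoc]

lemma radialFlux_eq_of_nonneg (hp : p ≠ 1) {t : ℝ} (hw : 0 ≤ w t) :
    radialFlux k p w t = t ^ k * w t ^ (p - 1) := by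
  rw [radialFlux, abs_of_nonneg hw, mul_assoc, show p - 1 = 1 + (p - 2) by ring,
    Real.rpow_add' hw (by contrapose! hp; linarith), Real.rpow_one]

lemma nonneg_of_radialFlux_nonneg {t : ℝ} (ht : 0 < t) (h : 0 ≤ radialFlux k p w t) :
    0 ≤ w t := by
  by_contra! hw
  have : 0 < t ^ k * |w t| ^ (p - 2) := by have := abs_pos.2 hw.ne; positivity
  unfold radialFlux at h
  nlinarith

lemma nonneg_of_hasDerivAt_radialFlux_nonneg (hp : 1 < p) {r : ℝ} {d : ℝ → ℝ}
    (hw0 : w 0 = 0) (hw : ContinuousOn w (Icc 0 r))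
    (hd : ∀ t ∈ Ioo 0 r, HasDerivAt (radialFlux k p w) (d t) t)
    (hd0 : ∀ t ∈ Ioo 0 r, 0 ≤ d t) :
    ∀ t ∈ Icc 0 r, 0 ≤ w t := by
  have hmono : MonotoneOn (radialFlux k p w) (Icc 0 r) :=
    monotoneOn_of_hasDerivWithinAt_nonneg (convex_Icc 0 r) (continuousOn_radialFlux hp hw)
      (fun t ht => (hd t (by rwa [interior_Icc] at ht)).hasDerivWithinAt)
      (fun t ht => hd0 t (by rwa [interior_Icc] at ht))
  intro t ht
  rcases ht.1.eq_or_lt with rfl | htpos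
  · exact hw0.ge
  · refine nonneg_of_radialFlux_nonneg (k := k) (p := p) htpos ?_
    have := hmono ⟨le_rfl, ht.1.trans ht.2⟩ ht ht.1
    simpa [radialFlux, hw0] using this

end radialFlux

lemma le_of_hasDerivAt_le_off_zeros {w w' B B' : ℝ → ℝ} {a b : ℝ} (hab : a ≤ b)
    (hw : ContinuousOn w (Icc a b)) (hwa : w a = 0)
    (hB : ContinuousOn B (Icc a b)) (hB0 : ∀ t ∈ Icc a b, 0 ≤ B t)
    (hw' : ∀ t ∈ Ioo a b, w t ≠ 0 → HasDerivAt w (w' t) t)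
    (hB' : ∀ t ∈ Ioo a b, HasDerivAt B (B' t) t)
    (hle : ∀ t ∈ Ioo a b, w t ≠ 0 → w' t ≤ B' t) :
    w b ≤ B b := by
  by_cases hwb : w b = 0
  · exact hwb ▸ hB0 b ⟨hab, le_rfl⟩
  -- compare `w` and `B` on `[c, b]`, where `c` is the last zero of `w` before `b`
  set Z := Icc a b ∩ w ⁻¹' {0}
  have hZbdd : BddAbove Z := ⟨b, fun t ht => ht.1.2⟩
  have hcZ : sSup Z ∈ Z :=
    (hw.preimage_isClosed_of_isClosed isClosed_Icc isClosed_singleton).csSup_mem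
      ⟨a, ⟨le_rfl, hab⟩, hwa⟩ hZbdd
  set c := sSup Z
  have hcb : c < b := lt_of_le_of_ne hcZ.1.2 fun h => hwb (h ▸ hcZ.2)
  have hsub : Icc c b ⊆ Icc a b := Icc_subset_Icc_left hcZ.1.1
  have hIoo : ∀ t ∈ Ioo c b, t ∈ Ioo a b ∧ w t ≠ 0 := fun t ht =>
    ⟨⟨hcZ.1.1.trans_lt ht.1, ht.2⟩,
      fun h0 => (not_le.2 ht.1) (le_csSup hZbdd ⟨⟨hcZ.1.1.trans ht.1.le, ht.2.le⟩, h0⟩)⟩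
  have hanti : AntitoneOn (w - B) (Icc c b) := by
    refine antitoneOn_of_hasDerivWithinAt_nonpos (f' := w' - B') (convex_Icc c b)
      ((hw.mono hsub).sub (hB.mono hsub)) (fun t ht => ?_) (fun t ht => ?_) <;>
      rw [interior_Icc] at ht <;> obtain ⟨ht, hwt⟩ := hIoo t ht
    · exact ((hw' t ht hwt).sub (hB' t ht)).hasDerivWithinAt
    · exact sub_nonpos.2 (hle t ht hwt)
  have := hanti ⟨le_rfl, hcb.le⟩ ⟨hcb.le, le_rfl⟩ hcb.le
  simp only [Pi.sub_apply] at this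
  linarith [hB0 c (hsub ⟨le_rfl, hcb.le⟩), show w c = 0 from hcZ.2]

lemma rpow_sub_one_mul_rpow_eq {t y k q α β : ℝ} (ht : 0 < t) (hy : 0 < y)
    (h : q * (β - 1) = -α) :
    (t ^ k * y ^ q) ^ (β - 1) * (t ^ k * y ^ α) = t ^ (k * β) := by
  rw [Real.mul_rpow (by positivity) (by positivity), ← Real.rpow_mul ht.le,
    ← Real.rpow_mul hy.le, h]
  calc t ^ (k * (β - 1)) * y ^ (-α) * (t ^ k * y ^ α)
      = t ^ (k * (β - 1) + k) * y ^ (-α + α) := by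
        rw [Real.rpow_add ht, Real.rpow_add hy]; ring
    _ = t ^ (k * β) := by rw [neg_add_cancel, Real.rpow_zero, mul_one]; ring_nf

lemma hasDerivAt_radialFlux_rpow {k : ℕ} {p α β c t : ℝ} {w : ℝ → ℝ} (hp : p ≠ 1)
    (hpβ : (p - 1) * β = p - 1 - α) (ht : 0 < t) (hwt : 0 < w t)
    (hd : HasDerivAt (radialFlux k p w) (t ^ k * (c * |w t| ^ α)) t) :
    HasDerivAt (fun s => radialFlux k p w s ^ β) (β * c * t ^ (k * β)) t := by
  have hh : radialFlux k p w t = t ^ (k : ℝ) * w t ^ (p - 1) := by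
    rw [Real.rpow_natCast]; exact radialFlux_eq_of_nonneg hp hwt.le
  refine (hd.rpow_const (.inl (by rw [hh]; positivity))).congr_deriv ?_
  have hexp : (p - 1) * (β - 1) = -α := by linear_combination hpβ
  rw [hh, abs_of_pos hwt, ← rpow_sub_one_mul_rpow_eq ht hwt hexp, ← Real.rpow_natCast]
  ring

lemma rpow_le_of_hasDerivAt_radialFlux {k : ℕ} {p α β δ r : ℝ} {w F : ℝ → ℝ}
    (hp : 1 < p) (hα : α < p - 1) (hβ : β = (p - 1 - α) / (p - 1)) (hδ : δ = k * β)
    (hr : 0 < r) (hw0 : w 0 = 0) (hw : ContinuousOn w (Icc 0 r))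
    (hF0 : ∀ t ∈ Ioc 0 r, 0 ≤ F t) (hFr : ∀ t ∈ Ioo 0 r, F t ≤ F r)
    (hd : ∀ t ∈ Ioo 0 r, HasDerivAt (radialFlux k p w) (t ^ k * (F t * |w t| ^ α)) t) :
    w r ^ (p - 1 - α) ≤ β / (δ + 1) * F r * r := by
  have hβ0 : 0 < β := by rw [hβ]; exact div_pos (by linarith) (by linarith)
  have hδ0 : 0 ≤ δ := by rw [hδ]; positivity
  have hpβ : (p - 1) * β = p - 1 - α := by
    rw [hβ]; field_simp [show p - 1 ≠ 0 by linarith]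
  have hFr0 : 0 ≤ F r := hF0 r ⟨hr, le_rfl⟩
  have hw_nonneg : ∀ t ∈ Icc 0 r, 0 ≤ w t :=
    nonneg_of_hasDerivAt_radialFlux_nonneg hp hw0 hw hd fun t ht => by
      have := hF0 t ⟨ht.1, ht.2.le⟩; have := ht.1; positivity
  have hw_pos : ∀ t ∈ Ioo 0 r, radialFlux k p w t ^ β ≠ 0 → 0 < w t := fun t ht hht => by
    refine (hw_nonneg t (Ioo_subset_Icc_self ht)).lt_of_ne fun hwt => hht ?_
    rw [radialFlux_eq_of_nonneg hp.ne' (hw_nonneg t (Ioo_subset_Icc_self ht)), ← hwt,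
      Real.zero_rpow (by linarith), mul_zero, Real.zero_rpow hβ0.ne']
  have hcmp := le_of_hasDerivAt_le_off_zeros (w := fun t => radialFlux k p w t ^ β)
    (B := fun t => β * F r * t ^ (δ + 1) / (δ + 1)) (B' := fun t => β * F r * t ^ δ) hr.le
    ((continuousOn_radialFlux hp hw).rpow_const fun _ _ => .inr hβ0.le)
    (by simp [radialFlux, hw0, Real.zero_rpow hβ0.ne'])
    (((continuous_const.mul (Real.continuous_rpow_const (by linarith))).div_const _).continuousOn)
    (fun t ht => by have := ht.1; positivity)
    (fun t ht hht => hasDerivAt_radialFlux_rpow hp.ne' hpβ ht.1 (hw_pos t ht hht) (hd t ht))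
    (fun t ht => (((Real.hasDerivAt_rpow_const (.inl ht.1.ne')).const_mul (β * F r)).div_const
      (δ + 1)).congr_deriv (by field_simp; ring_nf))
    (fun t ht _ => by
      rw [← hδ]
      have := hFr t ht; have := ht.1
      gcongr)
  have hwr := hw_nonneg r ⟨hr.le, le_rfl⟩
  rw [radialFlux_eq_of_nonneg hp.ne' hwr, ← Real.rpow_natCast,
    Real.mul_rpow (by positivity) (Real.rpow_nonneg hwr _), ← Real.rpow_mul hr.le,
    ← Real.rpow_mul hwr, ← hδ, hpβ, Real.rpow_add hr, Real.rpow_one] at hcmp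
  rw [← mul_le_mul_iff_right₀ (Real.rpow_pos_of_pos hr δ)]
  calc r ^ δ * w r ^ (p - 1 - α) ≤ β * F r * (r ^ δ * r) / (δ + 1) := hcmp
    _ = r ^ δ * (β / (δ + 1) * F r * r) := by ring

lemma Icc_subset_setOf_lt {r : ℝ} {R : EReal} (hrR : (r : EReal) < R) :
    Icc 0 r ⊆ {t : ℝ | 0 ≤ t ∧ (t : EReal) < R} :=
  fun _ ht => ⟨ht.1, (EReal.coe_le_coe_iff.2 ht.2).trans_lt hrR⟩

lemma RadialSol.monotoneOn_v {n : ℕ} {p α : ℝ} {f₁ f₂ g₁ g₂ g₃ : ℝ → ℝ} {R : EReal}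
    {u v u' v' : ℝ → ℝ} (hsol : RadialSol n p α f₁ f₂ g₁ g₂ g₃ R u v u' v') (hp : 1 < p)
    (hf₂ : B1cond f₂) (hg₂ : B1cond g₂) (hg₃ : B1cond g₃) {r : ℝ} (hrR : (r : EReal) < R) :
    MonotoneOn v (Icc 0 r) := by
  have hmem := Icc_subset_setOf_lt hrR
  have hv' : ∀ t ∈ Icc 0 r, 0 ≤ v' t :=
    nonneg_of_hasDerivAt_radialFlux_nonneg hp hsol.hv'0 (hsol.hv'c.mono hmem)
      (fun t ht => hsol.heqv t ht.1 (hmem (Ioo_subset_Icc_self ht)).2) fun t ht => by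
        have := hf₂.2.2 t ht.1
        have := hg₂.2.2 _ (hsol.hvpos t ht.1 (hmem (Ioo_subset_Icc_self ht)).2)
        have := hg₃.nonneg (abs_nonneg (u' t))
        have := ht.1
        positivity
  refine monotoneOn_of_hasDerivWithinAt_nonneg (convex_Icc 0 r)
    (fun t ht => (hsol.hv t (hmem ht).1 (hmem ht).2).continuousWithinAt.mono
      Icc_subset_Ici_self)
    (fun t ht => ?_) fun t ht => hv' t (interior_subset ht)
  have ht := hmem (interior_subset ht)
  exact (hsol.hv t ht.1 ht.2).mono (interior_subset.trans Icc_subset_Ici_self)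

theorem gradient_bound_general
    (n : ℕ) (hn : 2 ≤ n) (p α : ℝ) (hp : 1 < p) (hα : α < p - 1)
    (δ : ℝ) (hδ : δ = ((n : ℝ) - 1) * (p - 1 - α) / (p - 1))
    (f₁ f₂ g₁ g₂ g₃ : ℝ → ℝ)
    (hf₁ : B1cond f₁) (hf₂ : B1cond f₂) (hg₁ : B1cond g₁) (hg₂ : B1cond g₂) (hg₃ : B1cond g₃)
    (R : EReal) (u v u' v' : ℝ → ℝ)
    (hsol : RadialSol n p α f₁ f₂ g₁ g₂ g₃ R u v u' v') :
    ∀ r : ℝ, 0 < r → (r : EReal) < R →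
      (1 / r) * u' r ^ (p - 1 - α) ≤
        δ / (((n : ℝ) - 1) * (δ + 1)) * (f₁ r * g₁ (v r)) := by
  intro r hr hrR
  have hmem := Icc_subset_setOf_lt hrR
  have hvpos : ∀ t ∈ Ioc 0 r, 0 < v t := fun t ht =>
    hsol.hvpos t ht.1 (hmem (Ioc_subset_Icc_self ht)).2
  have hv_mono := hsol.monotoneOn_v hp hf₂ hg₂ hg₃ hrR
  have hF_mono : ∀ t ∈ Ioo 0 r, f₁ t * g₁ (v t) ≤ f₁ r * g₁ (v r) := fun t ht =>
    have hvt := hvpos t (Ioo_subset_Ioc_self ht)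
    mul_le_mul (hf₁.2.1 ht.1.le hr.le ht.2.le)
      (hg₁.2.1 hvt.le (hvpos r ⟨hr, le_rfl⟩).le
        (hv_mono (Ioo_subset_Icc_self ht) ⟨hr.le, le_rfl⟩ ht.2.le))
      (hg₁.2.2 _ hvt).le (hf₁.2.2 r hr).le
  have hn1 : ((n - 1 : ℕ) : ℝ) = (n : ℝ) - 1 := by rw [Nat.cast_sub (by omega), Nat.cast_one]
  have key := rpow_le_of_hasDerivAt_radialFlux (k := n - 1) (δ := δ)
    (F := fun t => f₁ t * g₁ (v t)) hp hα rfl (by rw [hδ, hn1]; ring) hr hsol.hu'0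
    (hsol.hu'c.mono hmem) (fun t ht => (mul_pos (hf₁.2.2 t ht.1) (hg₁.2.2 _ (hvpos t ht))).le)
    hF_mono (fun t ht => hsol.hequ t ht.1 (hmem (Ioo_subset_Icc_self ht)).2)
  have hconst : δ / (((n : ℝ) - 1) * (δ + 1)) = (p - 1 - α) / (p - 1) / (δ + 1) := by
    have : (n : ℝ) - 1 ≠ 0 := by rw [← hn1]; exact_mod_cast (by omega : n - 1 ≠ 0)
    rw [← div_div, hδ]
    field_simp
  rw [one_div, inv_mul_le_iff₀ hr, hconst]
  linarith

/-- Estimate (2.12) of the paper: pointwise bound on (1/r)·u'(r)^{p−1−α}. -/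
theorem gradient_bound
    (n : ℕ) (hn : 2 ≤ n) (p α : ℝ) (hp : 1 < p) (hα0 : 0 ≤ α) (hα : α < p - 1)
    (δ : ℝ) (hδ : δ = ((n : ℝ) - 1) * (p - 1 - α) / (p - 1))
    (f₁ f₂ g₁ g₂ g₃ : ℝ → ℝ)
    (hf₁ : B1cond f₁) (hf₂ : B1cond f₂) (hg₁ : B1cond g₁) (hg₂ : B1cond g₂) (hg₃ : B1cond g₃)
    (R : EReal) (hR : 0 < R) (u v u' v' : ℝ → ℝ)
    (hsol : RadialSol n p α f₁ f₂ g₁ g₂ g₃ R u v u' v')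
    (hunc : NonConstOn R u) (hvnc : NonConstOn R v) :
    ∀ r : ℝ, 0 < r → (r : EReal) < R →
      (1 / r) * u' r ^ (p - 1 - α) ≤
        δ / (((n : ℝ) - 1) * (δ + 1)) * (f₁ r * g₁ (v r)) :=
  gradient_bound_general n hn p α hp hα δ hδ f₁ f₂ g₁ g₂ g₃ hf₁ hf₂ hg₁ hg₂ hg₃ R u v u' v' hsol
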